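/- With the notation of the previous statement, suppose in addition each ℓ_j is strictly increasing, and for ε ∈ (0,1) set κ = κ_T := Γ_ρ(dT, ‖x-y‖₁) / (ℓ_1(εT) ∧ ⋯ ∧ ℓ_d(εT)). Then Σ_j ℓ_j(T ∧ τ_j) ≤ ℓ_1(εT) ∧ ⋯ ∧ ℓ_d(εT), and consequently τ_j ≤ T for every j = 1,…,d. -/

import Mathlib

open Set MeasureTheory Filter

/-- `G_ρ(r) = ∫_1^r du/ρ(u)`. -/
noncomputable def Grho (ρ : ℝ → ℝ) (r : ℝ) : ℝ := ∫ u in (1:ℝ)..r, 1 / ρ u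

/-- Generalized inverse of `G_ρ`, with the convention `G_ρ⁻¹(-∞) = 0`. -/
noncomputable def GrhoInv (ρ : ℝ → ℝ) (s : ℝ) : ℝ := sInf {r : ℝ | 0 < r ∧ s ≤ Grho ρ r}

/-- `Γ_ρ(T, r) = r + T ρ(G_ρ⁻¹(G_ρ(r) + T))`. -/
noncomputable def GamRho (ρ : ℝ → ℝ) (T r : ℝ) : ℝ := r + T * ρ (GrhoInv ρ (Grho ρ r + T))

/-! Writing `f(t) = ‖Z_t‖₁`, the key inequality gives `f ≤ F` for the majorant
`F(t) = ‖x - y‖₁ + d ∫_0^t ρ(f)`. Since `G_ρ' = 1/ρ` and `F' = d ρ(f) ≤ d ρ(F)`, the right Dini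
derivative of `G_ρ ∘ F` is at most `d`, so Bihari's comparison yields `f ≤ F ≤ G_ρ⁻¹(G_ρ(‖x - y‖₁) + dT)` on `[0, T]`, hence
`F(T) ≤ Γ_ρ(dT, ‖x - y‖₁)`, and then `κ Σ_j ℓ_j(T ∧ τ_j) ≤ F(T) ≤ Γ_ρ(dT, ‖x - y‖₁) = κ min_j ℓ_j(εT)`.
When `x = y` the Osgood condition makes `G_ρ(0) = 0 = G_ρ(1)`, and one runs the comparison from `1`
instead of `0`. -/

open Topology

section Grho

variable {ρ : ℝ → ℝ}

theorem intervalIntegrable_one_div_of_pos (hρc : ContinuousOn ρ (Ioi 0))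
    (hρpos : ∀ r > 0, 0 < ρ r) {a b : ℝ} (ha : 0 < a) (hb : 0 < b) :
    IntervalIntegrable (fun u => 1 / ρ u) volume a b := by
  have hsub : uIcc a b ⊆ Ioi 0 := fun u hu => (lt_min ha hb).trans_le hu.1
  exact ContinuousOn.intervalIntegrable <|
    continuousOn_const.div (hρc.mono hsub) fun u hu => (hρpos u (hsub hu)).ne'

theorem Grho_sub_Grho (hρc : ContinuousOn ρ (Ioi 0)) (hρpos : ∀ r > 0, 0 < ρ r)
    {a b : ℝ} (ha : 0 < a) (hb : 0 < b) :
    Grho ρ b - Grho ρ a = ∫ u in a..b, 1 / ρ u := by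
  rw [Grho, Grho, sub_eq_iff_eq_add', intervalIntegral.integral_add_adjacent_intervals
    (intervalIntegrable_one_div_of_pos hρc hρpos one_pos ha)
    (intervalIntegrable_one_div_of_pos hρc hρpos ha hb)]

theorem Grho_strictMonoOn (hρc : ContinuousOn ρ (Ioi 0)) (hρpos : ∀ r > 0, 0 < ρ r) :
    StrictMonoOn (Grho ρ) (Ioi 0) := by
  intro a ha b hb hab
  rw [← sub_pos, Grho_sub_Grho hρc hρpos ha hb]
  exact intervalIntegral.intervalIntegral_pos_of_pos_on
    (intervalIntegrable_one_div_of_pos hρc hρpos ha hb)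
    (fun u hu => one_div_pos.mpr (hρpos u (lt_trans ha hu.1))) hab

theorem Grho_sub_Grho_le (hρc : ContinuousOn ρ (Ioi 0)) (hρpos : ∀ r > 0, 0 < ρ r)
    (hρmono : MonotoneOn ρ (Ioi 0)) {a b : ℝ} (ha : 0 < a) (hab : a ≤ b) :
    Grho ρ b - Grho ρ a ≤ (b - a) / ρ a := by
  have hb : 0 < b := ha.trans_le hab
  rw [Grho_sub_Grho hρc hρpos ha hb]
  calc (∫ u in a..b, 1 / ρ u) ≤ ∫ _ in a..b, 1 / ρ a :=
        intervalIntegral.integral_mono_on hab (intervalIntegrable_one_div_of_pos hρc hρpos ha hb)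
          intervalIntegrable_const fun u hu =>
            one_div_le_one_div_of_le (hρpos a ha) (hρmono ha (ha.trans_le hu.1) hu.1)
    _ = (b - a) / ρ a := by rw [intervalIntegral.integral_const, smul_eq_mul, mul_one_div]

theorem hasDerivAt_Grho (hρc : ContinuousOn ρ (Ioi 0)) (hρpos : ∀ r > 0, 0 < ρ r)
    {x : ℝ} (hx : 0 < x) : HasDerivAt (Grho ρ) (1 / ρ x) x := by
  have hcont : ContinuousOn (fun u => 1 / ρ u) (Ioi 0) :=
    continuousOn_const.div hρc fun u hu => (hρpos u hu).ne'
  exact intervalIntegral.integral_hasDerivAt_right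
    (intervalIntegrable_one_div_of_pos hρc hρpos one_pos hx)
    (hcont.stronglyMeasurableAtFilter isOpen_Ioi x hx)
    (hcont.continuousAt (Ioi_mem_nhds hx))

theorem Grho_continuousOn (hρc : ContinuousOn ρ (Ioi 0)) (hρpos : ∀ r > 0, 0 < ρ r) :
    ContinuousOn (Grho ρ) (Ioi 0) := fun _ hx =>
  (hasDerivAt_Grho hρc hρpos hx).continuousAt.continuousWithinAt

theorem exists_le_Grho (hρc : ContinuousOn ρ (Ioi 0)) (hρpos : ∀ r > 0, 0 < ρ r)
    {C : ℝ} (hC : 0 < C) (hρC : ∀ r > 0, ρ r ≤ C * (1 + r)) (s : ℝ) :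
    ∃ r > 0, s ≤ Grho ρ r := by
  set r := Real.exp (2 * C * max s 0)
  have hr : 1 ≤ r := Real.one_le_exp (by positivity)
  refine ⟨r, one_pos.trans_le hr, ?_⟩
  have hlog : ∫ u in (1:ℝ)..r, 1 / (2 * C) * (1 / u) = max s 0 := by
    rw [intervalIntegral.integral_const_mul, integral_one_div_of_pos one_pos (by linarith),
      div_one, Real.log_exp]
    field_simp
  calc s ≤ max s 0 := le_max_left _ _
    _ = ∫ u in (1:ℝ)..r, 1 / (2 * C) * (1 / u) := hlog.symm
    _ ≤ ∫ u in (1:ℝ)..r, 1 / ρ u := by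
      refine intervalIntegral.integral_mono_on hr ?_
        (intervalIntegrable_one_div_of_pos hρc hρpos one_pos (by linarith)) fun u hu => ?_
      · exact (intervalIntegrable_one_div_of_pos (fun _ h => continuousWithinAt_id) (fun _ h => h)
          one_pos (by linarith)).const_mul _
      · have hu1 : 1 ≤ u := hu.1
        have hu0 : 0 < u := by linarith
        rw [one_div_mul_one_div]
        have := hρC u hu0
        exact one_div_le_one_div_of_le (hρpos u hu0) (by nlinarith)

theorem le_GrhoInv (hρc : ContinuousOn ρ (Ioi 0)) (hρpos : ∀ r > 0, 0 < ρ r)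
    {C : ℝ} (hC : 0 < C) (hρC : ∀ r > 0, ρ r ≤ C * (1 + r)) {x s : ℝ} (hx : 0 < x)
    (hxs : Grho ρ x ≤ s) : x ≤ GrhoInv ρ s := by
  obtain ⟨r, hr, hrs⟩ := exists_le_Grho hρc hρpos hC hρC s
  refine le_csInf ⟨r, hr, hrs⟩ fun r hr => ?_
  exact ((Grho_strictMonoOn hρc hρpos).le_iff_le hx hr.1).mp (hxs.trans hr.2)

/-- `∫_0^1 1/ρ` diverges, so the Bochner integral defining `Grho ρ 0` takes the junk value `0`. -/
theorem Grho_zero_of_tendsto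
    (hOsgood : Tendsto (fun ε => ∫ u in ε..(1:ℝ), 1 / ρ u) (𝓝[>] 0) atTop) :
    Grho ρ 0 = 0 := by
  suffices ¬ IntervalIntegrable (fun u => 1 / ρ u) volume 0 1 by
    rw [Grho, intervalIntegral.integral_symm, intervalIntegral.integral_undef this, neg_zero]
  intro hint
  have hcont := intervalIntegral.continuousOn_primitive_interval_left
    ((intervalIntegrable_iff').mp hint) 0 left_mem_uIcc
  rw [uIcc_of_le zero_le_one, ContinuousWithinAt] at hcont
  refine not_tendsto_atTop_of_tendsto_nhds (hcont.mono_left ?_) hOsgood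
  rw [← nhdsWithin_Ioc_eq_nhdsGT one_pos]
  exact nhdsWithin_mono _ Ioc_subset_Icc_self

end Grho

noncomputable def bihariMajorant (ρ u : ℝ → ℝ) (a c t : ℝ) : ℝ :=
  a + c * ∫ s in (0:ℝ)..t, ρ (u s)

section Bihari

variable {ρ u : ℝ → ℝ} {a c : ℝ}

theorem intervalIntegrable_comp_of_monotoneOn (hρnonneg : ∀ r ≥ 0, 0 ≤ ρ r)
    (hρmono : MonotoneOn ρ (Ici 0)) (hu : Continuous u) (hu0 : ∀ t, 0 ≤ u t) (t₁ t₂ : ℝ) :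
    IntervalIntegrable (fun s => ρ (u s)) volume t₁ t₂ := by
  have hρ' : Monotone fun r => ρ (max r 0) := fun r r' h =>
    hρmono (le_max_right r 0) (le_max_right r' 0) (max_le_max_right 0 h)
  have hcomp : (fun s => ρ (u s)) = fun s => ρ (max (u s) 0) := by
    simp only [max_eq_left (hu0 _)]
  obtain ⟨s₀, -, hs₀⟩ := isCompact_uIcc.exists_isMaxOn nonempty_uIcc
    (hu.continuousOn (s := uIcc t₁ t₂))
  rw [hcomp]
  refine (intervalIntegrable_const (c := ρ (u s₀))).mono_fun'
    (hρ'.measurable.comp hu.measurable).aestronglyMeasurable ?_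
  refine (ae_restrict_iff' measurableSet_uIoc).mpr (ae_of_all _ fun s hs => ?_)
  dsimp only
  rw [Real.norm_eq_abs, abs_of_nonneg (hρnonneg _ (le_max_right _ _)), max_eq_left (hu0 s)]
  exact hρmono (hu0 s) (hu0 s₀) (hs₀ (uIoc_subset_uIcc hs))

theorem continuous_bihariMajorant
    (hint : ∀ a b, IntervalIntegrable (fun s => ρ (u s)) volume a b) (a c : ℝ) :
    Continuous (bihariMajorant ρ u a c) :=
  continuous_const.add (continuous_const.mul (intervalIntegral.continuous_primitive hint 0))

theorem bihariMajorant_sub_bihariMajorant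
    (hint : ∀ a b, IntervalIntegrable (fun s => ρ (u s)) volume a b) (t z : ℝ) :
    bihariMajorant ρ u a c z - bihariMajorant ρ u a c t = c * ∫ s in t..z, ρ (u s) := by
  rw [bihariMajorant, bihariMajorant, ← intervalIntegral.integral_add_adjacent_intervals
    (hint 0 t) (hint t z)]
  ring

theorem monotone_bihariMajorant
    (hint : ∀ a b, IntervalIntegrable (fun s => ρ (u s)) volume a b)
    (hρu : ∀ s, 0 ≤ ρ (u s)) (hc : 0 ≤ c) : Monotone (bihariMajorant ρ u a c) := by
  intro t z htz
  rw [← sub_nonneg, bihariMajorant_sub_bihariMajorant hint]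
  exact mul_nonneg hc (intervalIntegral.integral_nonneg htz fun s _ => hρu s)

theorem le_bihariMajorant
    (hint : ∀ a b, IntervalIntegrable (fun s => ρ (u s)) volume a b)
    (hρu : ∀ s, 0 ≤ ρ (u s)) (hc : 0 ≤ c) {t : ℝ} (ht : 0 ≤ t) :
    a ≤ bihariMajorant ρ u a c t := by
  simpa [bihariMajorant] using monotone_bihariMajorant (a := a) hint hρu hc ht

theorem bihariMajorant_sub_le (hρmono : MonotoneOn ρ (Ici 0))
    (hint : ∀ a b, IntervalIntegrable (fun s => ρ (u s)) volume a b)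
    (hρu : ∀ s, 0 ≤ ρ (u s)) (hu0 : ∀ t, 0 ≤ u t) (hc : 0 ≤ c)
    (hub : ∀ t ≥ 0, u t ≤ bihariMajorant ρ u a c t) {t z : ℝ} (ht : 0 ≤ t) (htz : t ≤ z) :
    bihariMajorant ρ u a c z - bihariMajorant ρ u a c t ≤
      c * ((z - t) * ρ (bihariMajorant ρ u a c z)) := by
  have hmono := monotone_bihariMajorant (a := a) hint hρu hc
  rw [bihariMajorant_sub_bihariMajorant hint]
  refine mul_le_mul_of_nonneg_left ?_ hc
  calc (∫ s in t..z, ρ (u s)) ≤ ∫ _ in t..z, ρ (bihariMajorant ρ u a c z) :=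
        intervalIntegral.integral_mono_on htz (hint t z) intervalIntegrable_const fun s hs =>
          hρmono (hu0 s) ((hu0 z).trans (hub z (ht.trans htz)))
            ((hub s (ht.trans hs.1)).trans (hmono hs.2))
    _ = (z - t) * ρ (bihariMajorant ρ u a c z) := by
      rw [intervalIntegral.integral_const, smul_eq_mul]

theorem slope_Grho_comp_bihariMajorant_le (hρc : ContinuousOn ρ (Ioi 0))
    (hρpos : ∀ r > 0, 0 < ρ r) (hρmono : MonotoneOn ρ (Ici 0))
    (hint : ∀ a b, IntervalIntegrable (fun s => ρ (u s)) volume a b)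
    (hρu : ∀ s, 0 ≤ ρ (u s)) (hu0 : ∀ t, 0 ≤ u t) (ha : 0 < a) (hc : 0 ≤ c)
    (hub : ∀ t ≥ 0, u t ≤ bihariMajorant ρ u a c t) {t z : ℝ} (ht : 0 ≤ t) (htz : t < z) :
    slope (Grho ρ ∘ bihariMajorant ρ u a c) t z ≤
      c * ρ (bihariMajorant ρ u a c z) / ρ (bihariMajorant ρ u a c t) := by
  set F := bihariMajorant ρ u a c
  have hmono : Monotone F := monotone_bihariMajorant hint hρu hc
  have hFt : 0 < F t := ha.trans_le (le_bihariMajorant hint hρu hc ht)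
  rw [slope_def_field, div_le_iff₀ (sub_pos.mpr htz), Function.comp_apply, Function.comp_apply]
  calc Grho ρ (F z) - Grho ρ (F t) ≤ (F z - F t) / ρ (F t) :=
        Grho_sub_Grho_le hρc hρpos (hρmono.mono Ioi_subset_Ici_self) hFt (hmono htz.le)
    _ ≤ c * ((z - t) * ρ (F z)) / ρ (F t) :=
        div_le_div_of_nonneg_right (bihariMajorant_sub_le hρmono hint hρu hu0 hc hub ht htz.le)
          (hρpos _ hFt).le
    _ = c * ρ (F z) / ρ (F t) * (z - t) := by ring

theorem Grho_bihariMajorant_le (hρc : ContinuousOn ρ (Ioi 0)) (hρpos : ∀ r > 0, 0 < ρ r)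
    (hρnonneg : ∀ r ≥ 0, 0 ≤ ρ r) (hρmono : MonotoneOn ρ (Ici 0)) (hu : Continuous u)
    (hu0 : ∀ t, 0 ≤ u t) (ha : 0 < a) (hc : 0 ≤ c)
    (hub : ∀ t ≥ 0, u t ≤ bihariMajorant ρ u a c t) {t : ℝ} (ht : 0 ≤ t) :
    Grho ρ (bihariMajorant ρ u a c t) ≤ Grho ρ a + c * t := by
  have hint := intervalIntegrable_comp_of_monotoneOn hρnonneg hρmono hu hu0
  have hρu : ∀ s, 0 ≤ ρ (u s) := fun s => hρnonneg _ (hu0 s)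
  set F := bihariMajorant ρ u a c
  have hFpos : ∀ s ≥ 0, 0 < F s := fun s hs => ha.trans_le (le_bihariMajorant hint hρu hc hs)
  have hFcont : Continuous F := continuous_bihariMajorant hint a c
  refine image_le_of_liminf_slope_right_le_deriv_boundary (B := fun s => Grho ρ a + c * s)
    (B' := fun _ => c)
    ((Grho_continuousOn hρc hρpos).comp hFcont.continuousOn fun s hs => hFpos s hs.1)
    (by simp [F, bihariMajorant]) (by fun_prop)
    (fun s _ => by
      simpa using ((hasDerivAt_id s).const_mul c).const_add (Grho ρ a) |>.hasDerivWithinAt)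
    ?_ ⟨ht, le_rfl⟩
  intro s hs r hr
  have hρFs : 0 < ρ (F s) := hρpos _ (hFpos s hs.1)
  have hlim : Tendsto (fun z => c * ρ (F z) / ρ (F s)) (𝓝 s) (𝓝 c) := by
    have := (((hρc.continuousAt (Ioi_mem_nhds (hFpos s hs.1))).tendsto.comp
      hFcont.continuousAt).const_mul c).div_const (ρ (F s))
    rwa [mul_div_assoc, div_self hρFs.ne', mul_one] at this
  refine Eventually.frequently ?_
  filter_upwards [(hlim.eventually (gt_mem_nhds hr)).filter_mono nhdsWithin_le_nhds,
    self_mem_nhdsWithin] with z hz hsz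
  exact (slope_Grho_comp_bihariMajorant_le hρc hρpos hρmono hint hρu hu0 ha hc hub hs.1
    hsz).trans_lt hz

end Bihari

section GamRho

variable {ρ : ℝ → ℝ}

theorem exists_Grho_le
    (hOsgood : Tendsto (fun ε => ∫ u in ε..(1:ℝ), 1 / ρ u) (𝓝[>] 0) atTop) {r : ℝ} (hr : 0 ≤ r) :
    ∃ a > 0, r ≤ a ∧ Grho ρ a ≤ Grho ρ r := by
  rcases hr.eq_or_lt with rfl | hr
  · refine ⟨1, one_pos, zero_le_one, ?_⟩
    rw [Grho_zero_of_tendsto hOsgood, Grho, intervalIntegral.integral_same]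
  · exact ⟨r, hr, le_rfl, le_rfl⟩

theorem GamRho_pos (hρc : ContinuousOn ρ (Ioi 0)) (hρpos : ∀ r > 0, 0 < ρ r)
    {C : ℝ} (hC : 0 < C) (hρC : ∀ r > 0, ρ r ≤ C * (1 + r))
    (hOsgood : Tendsto (fun ε => ∫ u in ε..(1:ℝ), 1 / ρ u) (𝓝[>] 0) atTop)
    {T r : ℝ} (hT : 0 < T) (hr : 0 ≤ r) : 0 < GamRho ρ T r := by
  obtain ⟨a, ha, -, hGa⟩ := exists_Grho_le hOsgood hr
  have haB : a ≤ GrhoInv ρ (Grho ρ r + T) := le_GrhoInv hρc hρpos hC hρC ha (by linarith)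
  exact add_pos_of_nonneg_of_pos hr (mul_pos hT (hρpos _ (ha.trans_le haB)))

theorem bihariMajorant_le_GamRho (hρc : ContinuousOn ρ (Ioi 0)) (hρpos : ∀ r > 0, 0 < ρ r)
    (hρnonneg : ∀ r ≥ 0, 0 ≤ ρ r) (hρmono : MonotoneOn ρ (Ici 0))
    {C : ℝ} (hC : 0 < C) (hρC : ∀ r > 0, ρ r ≤ C * (1 + r))
    (hOsgood : Tendsto (fun ε => ∫ u in ε..(1:ℝ), 1 / ρ u) (𝓝[>] 0) atTop)
    {u : ℝ → ℝ} (hu : Continuous u) (hu0 : ∀ t, 0 ≤ u t) {r c T : ℝ} (hr : 0 ≤ r) (hc : 0 ≤ c)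
    (hT : 0 ≤ T) (hub : ∀ t ≥ 0, u t ≤ bihariMajorant ρ u r c t) :
    bihariMajorant ρ u r c T ≤ GamRho ρ (c * T) r := by
  have hint := intervalIntegrable_comp_of_monotoneOn hρnonneg hρmono hu hu0
  have hρu : ∀ s, 0 ≤ ρ (u s) := fun s => hρnonneg _ (hu0 s)
  obtain ⟨a, ha, hra, hGa⟩ := exists_Grho_le hOsgood hr
  set B := GrhoInv ρ (Grho ρ r + c * T)
  have hub' : ∀ t ≥ 0, u t ≤ bihariMajorant ρ u a c t := fun t ht =>
    (hub t ht).trans (by simp only [bihariMajorant]; linarith)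
  have huB : ∀ t ∈ Icc 0 T, u t ≤ B := by
    intro t ht
    refine (hub' t ht.1).trans (le_GrhoInv hρc hρpos hC hρC
      (ha.trans_le (le_bihariMajorant hint hρu hc ht.1)) ?_)
    have := Grho_bihariMajorant_le hρc hρpos hρnonneg hρmono hu hu0 ha hc hub' ht.1
    nlinarith [mul_le_mul_of_nonneg_left ht.2 hc]
  have hint_le : ∫ s in (0:ℝ)..T, ρ (u s) ≤ T * ρ B := by
    calc ∫ s in (0:ℝ)..T, ρ (u s) ≤ ∫ _ in (0:ℝ)..T, ρ B :=
          intervalIntegral.integral_mono_on hT (hint 0 T) intervalIntegrable_const fun s hs =>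
            hρmono (hu0 s) ((hu0 0).trans (huB 0 ⟨le_rfl, hT⟩)) (huB s hs)
      _ = T * ρ B := by rw [intervalIntegral.integral_const, smul_eq_mul, sub_zero]
  rw [bihariMajorant, GamRho, mul_assoc]
  gcongr

end GamRho

theorem continuous_sum_abs_comp_max {ι : Type*} [Fintype ι] {Z g : ℝ → ι → ℝ}
    (hg : ∀ j a b, IntervalIntegrable (fun s => g s j) volume a b)
    (hZ : ∀ t ≥ 0, ∀ j, Z t j = Z 0 j + ∫ s in (0:ℝ)..t, g s j) :
    Continuous fun t => ∑ j, |Z (max t 0) j| := by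
  have hZ' : (fun t => ∑ j, |Z (max t 0) j|) =
      fun t => ∑ j, |Z 0 j + ∫ s in (0:ℝ)..max t 0, g s j| :=
    funext fun t => Finset.sum_congr rfl fun j _ => by rw [hZ _ (le_max_right t 0)]
  rw [hZ']
  exact continuous_finsetSum _ fun j _ => (continuous_const.add
    ((intervalIntegral.continuous_primitive (hg j) 0).comp
      (continuous_id.max continuous_const))).abs

theorem ciInf_apply_pos {ι : Type*} [Finite ι] [Nonempty ι] {ℓ : ι → ℝ → ℝ}
    (hℓ : ∀ j, StrictMonoOn (ℓ j) (Ici 0)) (hℓ0 : ∀ j, ℓ j 0 = 0) {t : ℝ} (ht : 0 < t) :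
    0 < ⨅ j, ℓ j t := by
  obtain ⟨j, hj⟩ := exists_eq_ciInf_of_finite (f := fun j => ℓ j t)
  rw [← hj, ← hℓ0 j]
  exact hℓ j self_mem_Ici ht.le ht

theorem le_of_sum_apply_min_le_ciInf {ι : Type*} [Fintype ι] {ℓ : ι → ℝ → ℝ}
    (hℓ : ∀ j, StrictMonoOn (ℓ j) (Ici 0)) (hℓnonneg : ∀ j, ∀ t ≥ (0:ℝ), 0 ≤ ℓ j t)
    {T ε : ℝ} {τ : ι → ℝ} (hT : 0 < T) (hτ : ∀ j, 0 ≤ τ j) (hε : ε ∈ Ioo (0:ℝ) 1)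
    (h : ∑ j, ℓ j (min T (τ j)) ≤ ⨅ j, ℓ j (ε * T)) (j : ι) : τ j ≤ T := by
  have hℓj : ℓ j (min T (τ j)) ≤ ℓ j (ε * T) :=
    calc ℓ j (min T (τ j)) ≤ ∑ i, ℓ i (min T (τ i)) :=
          Finset.single_le_sum (fun i _ => hℓnonneg i _ (le_min hT.le (hτ i))) (Finset.mem_univ j)
      _ ≤ ⨅ i, ℓ i (ε * T) := h
      _ ≤ ℓ j (ε * T) := ciInf_le (finite_range _).bddBelow j
  have hle := ((hℓ j).le_iff_le (le_min hT.le (hτ j)) (mul_nonneg hε.1.le hT.le)).mp hℓj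
  by_contra! hlt
  rw [min_eq_left hlt.le] at hle
  nlinarith [hε.2]

theorem coupling_succeeds_general (d : ℕ) (hd : 0 < d) (ρ : ℝ → ℝ)
    (hρc : ContinuousOn ρ (Ioi 0))
    (hρpos : ∀ r > 0, 0 < ρ r)
    (hρnonneg : ∀ r ≥ 0, 0 ≤ ρ r)
    (hρmono : MonotoneOn ρ (Ici 0))
    (hρlin : ∃ C > 0, ∀ r > 0, ρ r ≤ C * (1 + r))
    (hOsgood : Tendsto (fun ε => ∫ u in ε..(1:ℝ), 1 / ρ u) (nhdsWithin 0 (Ioi 0)) atTop)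
    (T : ℝ) (hT : 0 < T) (x y : Fin d → ℝ)
    (Z : ℝ → Fin d → ℝ) (hZ0 : Z 0 = x - y)
    (hZac : ∃ g : ℝ → Fin d → ℝ,
      (∀ j, ∀ a b : ℝ, IntervalIntegrable (fun s => g s j) volume a b) ∧
      ∀ t ≥ (0:ℝ), ∀ j, Z t j = Z 0 j + ∫ s in (0:ℝ)..t, g s j)
    (ℓ : Fin d → ℝ → ℝ)
    (hℓstrict : ∀ j, StrictMonoOn (ℓ j) (Ici 0))
    (hℓ0 : ∀ j, ℓ j 0 = 0) (hℓnonneg : ∀ j, ∀ t ≥ (0:ℝ), 0 ≤ ℓ j t)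
    (τ : Fin d → ℝ) (hτ : ∀ j, 0 ≤ τ j)
    (ε : ℝ) (hε : ε ∈ Ioo (0:ℝ) 1)
    (κ : ℝ)
    (hκdef : κ = GamRho ρ ((d : ℝ) * T) (∑ j, |x j - y j|) / (⨅ j, ℓ j (ε * T)))
    (hkey : ∀ t ≥ (0:ℝ),
      (∑ j, |Z t j|) + κ * (∑ j, ℓ j (min t (τ j))) ≤
        (∑ j, |Z 0 j|) + (d : ℝ) * ∫ s in (0:ℝ)..t, ρ (∑ j, |Z s j|)) :
    (∑ j, ℓ j (min T (τ j))) ≤ (⨅ j, ℓ j (ε * T)) ∧ ∀ j, τ j ≤ T := by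
  obtain ⟨g, hg, hZg⟩ := hZac
  obtain ⟨C, hC, hρC⟩ := hρlin
  have : Nonempty (Fin d) := Fin.pos_iff_nonempty.mp hd
  set f : ℝ → ℝ := fun t => ∑ j, |Z (max t 0) j|
  set r := ∑ j, |x j - y j|
  set S : ℝ → ℝ := fun t => ∑ j, ℓ j (min t (τ j))
  have hf0 : ∀ t, 0 ≤ f t := fun t => Finset.sum_nonneg fun j _ => abs_nonneg _
  have hr : 0 ≤ r := Finset.sum_nonneg fun j _ => abs_nonneg _
  have hdT : 0 < (d : ℝ) * T := mul_pos (Nat.cast_pos.mpr hd) hT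
  have hm := ciInf_apply_pos hℓstrict hℓ0 (mul_pos hε.1 hT)
  have hκ : 0 < κ := hκdef ▸ div_pos (GamRho_pos hρc hρpos hC hρC hOsgood hdT hr) hm
  have hkey' : ∀ t ≥ 0, f t + κ * S t ≤ bihariMajorant ρ f r d t := by
    intro t ht
    have hint : ∫ s in (0:ℝ)..t, ρ (∑ j, |Z s j|) = ∫ s in (0:ℝ)..t, ρ (f s) :=
      intervalIntegral.integral_congr fun s hs => by
        simp only [f, max_eq_left (uIcc_of_le ht ▸ hs).1]
    have := hkey t ht
    rwa [show ∑ j, |Z t j| = f t by simp only [f, max_eq_left ht],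
      show ∑ j, |Z 0 j| = r by simp only [r, hZ0, Pi.sub_apply], hint] at this
  have hS : S T ≤ ⨅ j, ℓ j (ε * T) := by
    refine le_of_mul_le_mul_left ?_ hκ
    calc κ * S T ≤ bihariMajorant ρ f r d T := by linarith [hkey' T hT.le, hf0 T]
      _ ≤ GamRho ρ (d * T) r :=
        bihariMajorant_le_GamRho hρc hρpos hρnonneg hρmono hC hρC hOsgood
          (continuous_sum_abs_comp_max hg hZg) hf0 hr (Nat.cast_nonneg d) hT.le fun t ht => by
            have hS0 : 0 ≤ S t := Finset.sum_nonneg fun j _ => hℓnonneg j _ (le_min ht (hτ j))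
            nlinarith [hkey' t ht, mul_nonneg hκ.le hS0]
      _ = κ * ⨅ j, ℓ j (ε * T) := by rw [hκdef, div_mul_cancel₀ _ hm.ne']
  exact ⟨hS, le_of_sum_apply_min_le_ciInf hℓstrict hℓnonneg hT hτ hε hS⟩

/-- The coupling succeeds before time `T`: with
`κ = Γ_ρ(dT, ‖x-y‖₁)/(ℓ_1(εT) ∧ ⋯ ∧ ℓ_d(εT))`, one has
`Σ_j ℓ_j(T ∧ τ_j) ≤ ℓ_1(εT) ∧ ⋯ ∧ ℓ_d(εT)` and hence `τ_j ≤ T` for all `j`. -/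
theorem coupling_succeeds (d : ℕ) (hd : 0 < d) (ρ : ℝ → ℝ)
    (hρc : ContinuousOn ρ (Ioi 0))
    (hρpos : ∀ r > 0, 0 < ρ r)
    (hρnonneg : ∀ r ≥ 0, 0 ≤ ρ r)
    (hρmono : MonotoneOn ρ (Ici 0))
    (hρlin : ∃ C > 0, ∀ r > 0, ρ r ≤ C * (1 + r))
    (hOsgood : Tendsto (fun ε => ∫ u in ε..(1:ℝ), 1 / ρ u) (nhdsWithin 0 (Ioi 0)) atTop)
    (T : ℝ) (hT : 0 < T) (x y : Fin d → ℝ)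
    (Z : ℝ → Fin d → ℝ) (hZ0 : Z 0 = x - y)
    (hZac : ∃ g : ℝ → Fin d → ℝ,
      (∀ j, ∀ a b : ℝ, IntervalIntegrable (fun s => g s j) volume a b) ∧
      ∀ t ≥ (0:ℝ), ∀ j, Z t j = Z 0 j + ∫ s in (0:ℝ)..t, g s j)
    (ℓ : Fin d → ℝ → ℝ)
    (hℓmono : ∀ j, MonotoneOn (ℓ j) (Ici 0))
    (hℓstrict : ∀ j, StrictMonoOn (ℓ j) (Ici 0))
    (hℓ0 : ∀ j, ℓ j 0 = 0) (hℓnonneg : ∀ j, ∀ t ≥ (0:ℝ), 0 ≤ ℓ j t)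
    (τ : Fin d → ℝ) (hτ : ∀ j, 0 ≤ τ j)
    (ε : ℝ) (hε : ε ∈ Ioo (0:ℝ) 1)
    (κ : ℝ)
    (hκdef : κ = GamRho ρ ((d : ℝ) * T) (∑ j, |x j - y j|) / (⨅ j, ℓ j (ε * T)))
    (hkey : ∀ t ≥ (0:ℝ),
      (∑ j, |Z t j|) + κ * (∑ j, ℓ j (min t (τ j))) ≤
        (∑ j, |Z 0 j|) + (d : ℝ) * ∫ s in (0:ℝ)..t, ρ (∑ j, |Z s j|)) :
    (∑ j, ℓ j (min T (τ j))) ≤ (⨅ j, ℓ j (ε * T)) ∧ ∀ j, τ j ≤ T :=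
  coupling_succeeds_general d hd ρ hρc hρpos hρnonneg hρmono hρlin hOsgood T hT x y Z hZ0 hZac ℓ
    hℓstrict hℓ0 hℓnonneg τ hτ ε hε κ hκdef hkey
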